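/- Let T ⊂ GL₂(ℝ) be the subgroup of invertible upper-triangular 2×2 real matrices (the Borel subgroup fixing the point at infinity). Then T acts simply transitively, by linear substitution, on the set of binary cubic forms of the shape l₁²·l₂ where l₁ and l₂ are linearly independent linear forms whose coefficients of X are both nonzero (i.e., cubics with one double and one simple root, both roots distinct from the fixed point at infinity): for any two such cubics p and q there exists a unique upper-triangular g ∈ GL₂(ℝ) with q = p∘g. -/

import Mathlib

open MvPolynomial

/-- The linear form `c₀·X + c₁·Y` with coefficient vector `c ∈ ℝ²`. -/
noncomputable def linForm (c : Fin 2 → ℝ) : MvPolynomial (Fin 2) ℝ :=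
  C (c 0) * X 0 + C (c 1) * X 1

/-- Right action of a 2×2 matrix `g` on binary forms by linear substitution:
`(p∘g)(X,Y) = p(g₀₀X + g₀₁Y, g₁₀X + g₁₁Y)`. -/
noncomputable def substAction (g : Matrix (Fin 2) (Fin 2) ℝ) (p : MvPolynomial (Fin 2) ℝ) :
    MvPolynomial (Fin 2) ℝ :=
  aeval (fun i => ∑ j, C (g i j) * X j) p

lemma substAction_linForm (g : Matrix (Fin 2) (Fin 2) ℝ) (c : Fin 2 → ℝ) :
    substAction g (linForm c) = linForm (Matrix.vecMul c g) := by
  simp [substAction, linForm, Matrix.vecMul, dotProduct, Fin.sum_univ_two]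
  ring

lemma substAction_cubic (g : Matrix (Fin 2) (Fin 2) ℝ) (a b : Fin 2 → ℝ) :
    substAction g (linForm a ^ 2 * linForm b)
      = linForm (Matrix.vecMul a g) ^ 2 * linForm (Matrix.vecMul b g) := by
  simp only [substAction, map_mul, map_pow]
  rw [← substAction_linForm g a, ← substAction_linForm g b]
  rfl

lemma eval_linForm (c : Fin 2 → ℝ) (t : ℝ) : eval ![t, 1] (linForm c) = c 0 * t + c 1 := by
  simp [linForm]

lemma eval_cubic (u v : Fin 2 → ℝ) (t : ℝ) :
    eval ![t, 1] (linForm u ^ 2 * linForm v) = (u 0 * t + u 1) ^ 2 * (v 0 * t + v 1) := by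
  simp [eval_linForm]

lemma linForm_smul (k : ℝ) (c : Fin 2 → ℝ) : linForm (k • c) = C k * linForm c := by
  simp [linForm]
  ring

lemma det_ne_zero_of_li {a b : Fin 2 → ℝ} (hb : b 0 ≠ 0)
    (hab : LinearIndependent ℝ ![a, b]) : a 0 * b 1 - a 1 * b 0 ≠ 0 := by
  rw [linearIndependent_fin2] at hab
  intro hd
  apply hab.2 (a 0 / b 0)
  funext i
  fin_cases i <;> simp [Matrix.cons_val_one, Matrix.head_cons] <;> field_simp <;> nlinarith [hd]

/-- Core algebraic lemma: equality of the two factored cubics forces proportional factors. -/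
lemma cubic_factor_core (a0 a1 b0 b1 m0 m1 n0 n1 : ℝ) (ha : a0 ≠ 0) (hb : b0 ≠ 0)
    (hab : a0 * b1 - a1 * b0 ≠ 0)
    (h : ∀ x : ℝ, (a0 * x + a1) ^ 2 * (b0 * x + b1) = (m0 * x + m1) ^ 2 * (n0 * x + n1)) :
    a1 * m0 - a0 * m1 = 0 ∧ b1 * n0 - b0 * n1 = 0 ∧ a0 ^ 2 * b0 = m0 ^ 2 * n0 := by
  have H0 := h 0
  have H1 := h 1
  have Hm := h (-1)
  have H2 := h 2
  have E0 : a1 ^ 2 * b1 - m1 ^ 2 * n1 = 0 := by linear_combination H0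
  have E1 : (2 * a0 * a1 * b1 + a1 ^ 2 * b0) - (2 * m0 * m1 * n1 + m1 ^ 2 * n0) = 0 := by
    linear_combination (-1/2 : ℝ) * H0 + H1 - (1/3 : ℝ) * Hm - (1/6 : ℝ) * H2
  have E2 : (a0 ^ 2 * b1 + 2 * a0 * a1 * b0) - (m0 ^ 2 * n1 + 2 * m0 * m1 * n0) = 0 := by
    linear_combination (-1 : ℝ) * H0 + (1/2 : ℝ) * H1 + (1/2 : ℝ) * Hm
  have E3 : a0 ^ 2 * b0 - m0 ^ 2 * n0 = 0 := by
    linear_combination (1/2 : ℝ) * H0 - (1/2 : ℝ) * H1 - (1/6 : ℝ) * Hm + (1/6 : ℝ) * H2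
  have hd : (a1 * m0 - a0 * m1) ^ 2 * (b1 * m0 - b0 * m1) = 0 := by
    linear_combination (-m1 ^ 3) * E3 + (m1 ^ 2 * m0) * E2 + (-(m1 * m0 ^ 2)) * E1 + m0 ^ 3 * E0
  have hS : (a1 * m0 - a0 * m1) *
      (2 * a0 * (b1 * m0 - b0 * m1) + b0 * (a1 * m0 - a0 * m1)) = 0 := by
    linear_combination (3 * m1 ^ 2) * E3 + (-(2 * m0 * m1)) * E2 + m0 ^ 2 * E1
  have hdelta : a1 * m0 - a0 * m1 = 0 := by
    by_contra hne
    have hw : b1 * m0 - b0 * m1 = 0 := by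
      rcases mul_eq_zero.mp hd with h' | h'
      · exact absurd (pow_eq_zero_iff (two_ne_zero) |>.mp h') hne
      · exact h'
    rcases mul_eq_zero.mp hS with h' | h'
    · exact hne h'
    · have : b0 * (a1 * m0 - a0 * m1) = 0 := by linear_combination h' - 2 * a0 * hw
      rcases mul_eq_zero.mp this with h'' | h''
      · exact hb h''
      · exact hne h''
  have hd' : (a1 * n0 - a0 * n1) ^ 2 * (b1 * n0 - b0 * n1) = 0 := by
    linear_combination (-n1 ^ 3) * E3 + (n1 ^ 2 * n0) * E2 + (-(n1 * n0 ^ 2)) * E1 + n0 ^ 3 * E0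
  have hwp : b1 * n0 - b0 * n1 = 0 := by
    by_contra hne
    have hdp : a1 * n0 - a0 * n1 = 0 := by
      rcases mul_eq_zero.mp hd' with h' | h'
      · exact pow_eq_zero_iff (two_ne_zero) |>.mp h'
      · exact absurd h' hne
    have hfin : a0 ^ 3 * (a0 * b1 - a1 * b0) = 0 := by
      linear_combination a0 ^ 2 * E2 + (-(a0 * m0 ^ 2)) * hdp + (-(2 * a0 * m0 * n0)) * hdelta
        + (-(3 * a0 * a1)) * E3
    rcases mul_eq_zero.mp hfin with h' | h'
    · exact ha (pow_eq_zero_iff (three_ne_zero) |>.mp h')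
    · exact hab h'
  exact ⟨hdelta, hwp, by linarith⟩

lemma cube_root_exists (v : ℝ) : ∃ t : ℝ, t ^ 3 = v := by
  rcases le_or_gt 0 v with hv | hv
  · exact ⟨v ^ (((3 : ℕ) : ℝ))⁻¹, Real.rpow_inv_natCast_pow hv (by norm_num)⟩
  · obtain ⟨t, ht⟩ : ∃ t : ℝ, t ^ 3 = -v :=
      ⟨(-v) ^ (((3 : ℕ) : ℝ))⁻¹, Real.rpow_inv_natCast_pow (by linarith) (by norm_num)⟩
    exact ⟨-t, by rw [Odd.neg_pow (by decide), ht, neg_neg]⟩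

/-- The Borel subgroup of invertible upper-triangular matrices acts simply transitively
on binary cubics `l₁²·l₂` with `l₁, l₂` linearly independent linear forms whose
`X`-coefficients are both nonzero: for two such cubics `p, q` there is a unique
upper-triangular `g ∈ GL₂(ℝ)` with `q = p∘g`. -/
theorem borel_simply_transitive_on_double_simple_cubics
    (a b m n : Fin 2 → ℝ)
    (ha : a 0 ≠ 0) (hb : b 0 ≠ 0) (hab : LinearIndependent ℝ ![a, b])
    (hm : m 0 ≠ 0) (hn : n 0 ≠ 0) (hmn : LinearIndependent ℝ ![m, n]) :
    ∃! g : GL (Fin 2) ℝ,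
      (g : Matrix (Fin 2) (Fin 2) ℝ) 1 0 = 0 ∧
      substAction (↑g) ((linForm a) ^ 2 * linForm b) = (linForm m) ^ 2 * linForm n := by
  have hDab : a 0 * b 1 - a 1 * b 0 ≠ 0 := det_ne_zero_of_li hb hab
  have hDmn : m 0 * n 1 - m 1 * n 0 ≠ 0 := det_ne_zero_of_li hn hmn
  have habn : a 0 ^ 2 * b 0 ≠ 0 := mul_ne_zero (pow_ne_zero 2 ha) hb
  have hmn0 : m 0 ^ 2 * n 0 ≠ 0 := mul_ne_zero (pow_ne_zero 2 hm) hn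
  -- any admissible g satisfies three polynomial equations in its entries
  have key : ∀ g : GL (Fin 2) ℝ, (↑g : Matrix (Fin 2) (Fin 2) ℝ) 1 0 = 0 →
      substAction (↑g) ((linForm a) ^ 2 * linForm b) = (linForm m) ^ 2 * linForm n →
      a 0 ^ 2 * b 0 * ((↑g : Matrix (Fin 2) (Fin 2) ℝ) 0 0) ^ 3 = m 0 ^ 2 * n 0 ∧
      m 0 * (a 0 * (↑g : Matrix (Fin 2) (Fin 2) ℝ) 0 1
          + a 1 * (↑g : Matrix (Fin 2) (Fin 2) ℝ) 1 1)
        = m 1 * (a 0 * (↑g : Matrix (Fin 2) (Fin 2) ℝ) 0 0) ∧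
      n 0 * (b 0 * (↑g : Matrix (Fin 2) (Fin 2) ℝ) 0 1
          + b 1 * (↑g : Matrix (Fin 2) (Fin 2) ℝ) 1 1)
        = n 1 * (b 0 * (↑g : Matrix (Fin 2) (Fin 2) ℝ) 0 0) := by
    intro g hg0 hsub
    set M := (↑g : Matrix (Fin 2) (Fin 2) ℝ) with hMdef
    have hdet : M.det ≠ 0 := IsUnit.ne_zero ((Matrix.isUnit_iff_isUnit_det M).mp (Units.isUnit g))
    have hdet2 : M 0 0 * M 1 1 ≠ 0 := by
      rw [Matrix.det_fin_two, hg0] at hdet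
      intro h0; apply hdet; rw [show M 0 0 * M 1 1 = 0 from h0]; ring
    have hx0 : M 0 0 ≠ 0 := left_ne_zero_of_mul hdet2
    have hz0 : M 1 1 ≠ 0 := right_ne_zero_of_mul hdet2
    have hA : Matrix.vecMul a M = ![a 0 * M 0 0, a 0 * M 0 1 + a 1 * M 1 1] := by
      funext j
      fin_cases j <;>
        simp [Matrix.vecMul, dotProduct, Fin.sum_univ_two, hg0] <;> ring
    have hB : Matrix.vecMul b M = ![b 0 * M 0 0, b 0 * M 0 1 + b 1 * M 1 1] := by
      funext j
      fin_cases j <;>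
        simp [Matrix.vecMul, dotProduct, Fin.sum_univ_two, hg0] <;> ring
    rw [substAction_cubic, hA, hB] at hsub
    have hev : ∀ t : ℝ,
        (a 0 * M 0 0 * t + (a 0 * M 0 1 + a 1 * M 1 1)) ^ 2
          * (b 0 * M 0 0 * t + (b 0 * M 0 1 + b 1 * M 1 1))
        = (m 0 * t + m 1) ^ 2 * (n 0 * t + n 1) := by
      intro t
      have h' := congrArg (eval ![t, 1]) hsub
      rw [eval_cubic, eval_cubic] at h'
      simpa using h'
    have hd : a 0 * M 0 0 * (b 0 * M 0 1 + b 1 * M 1 1)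
        - (a 0 * M 0 1 + a 1 * M 1 1) * (b 0 * M 0 0) ≠ 0 := by
      have : a 0 * M 0 0 * (b 0 * M 0 1 + b 1 * M 1 1)
          - (a 0 * M 0 1 + a 1 * M 1 1) * (b 0 * M 0 0)
          = (M 0 0 * M 1 1) * (a 0 * b 1 - a 1 * b 0) := by ring
      rw [this]
      exact mul_ne_zero hdet2 hDab
    obtain ⟨k1, k2, k3⟩ := cubic_factor_core (a 0 * M 0 0) (a 0 * M 0 1 + a 1 * M 1 1)
      (b 0 * M 0 0) (b 0 * M 0 1 + b 1 * M 1 1) (m 0) (m 1) (n 0) (n 1)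
      (mul_ne_zero ha hx0) (mul_ne_zero hb hx0) hd hev
    refine ⟨by linear_combination k3, by linear_combination k1, by linear_combination k2⟩
  -- construct the matrix
  obtain ⟨x, hx3⟩ := cube_root_exists ((m 0 ^ 2 * n 0) / (a 0 ^ 2 * b 0))
  have hU1 : a 0 ^ 2 * b 0 * x ^ 3 = m 0 ^ 2 * n 0 := by
    rw [hx3]; field_simp
  have hx0 : x ≠ 0 := by
    intro h0; apply hmn0; rw [← hU1, h0]; ring
  obtain ⟨D, hD⟩ : ∃ D : ℝ, D = m 0 * n 0 * (a 0 * b 1 - a 1 * b 0) := ⟨_, rfl⟩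
  have hD0 : D ≠ 0 := by rw [hD]; exact mul_ne_zero (mul_ne_zero hm hn) hDab
  obtain ⟨y, hy⟩ : ∃ y : ℝ, y = (m 1 * a 0 * x * (n 0 * b 1) - n 1 * b 0 * x * (m 0 * a 1)) / D :=
    ⟨_, rfl⟩
  obtain ⟨z, hz⟩ : ∃ z : ℝ, z = a 0 * b 0 * x * (m 0 * n 1 - m 1 * n 0) / D := ⟨_, rfl⟩
  have hz0 : z ≠ 0 := by
    rw [hz]
    exact div_ne_zero (mul_ne_zero (mul_ne_zero (mul_ne_zero ha hb) hx0) hDmn) hD0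
  have hU2 : m 0 * (a 0 * y + a 1 * z) = m 1 * (a 0 * x) := by
    have hDab' : a 0 * b 1 - b 0 * a 1 ≠ 0 := by rwa [mul_comm (b 0)]
    rw [hy, hz, hD]; field_simp; ring
  have hU3 : n 0 * (b 0 * y + b 1 * z) = n 1 * (b 0 * x) := by
    have hDab' : a 0 * b 1 - b 0 * a 1 ≠ 0 := by rwa [mul_comm (b 0)]
    rw [hy, hz, hD]; field_simp; ring
  obtain ⟨M, hM⟩ : ∃ M : Matrix (Fin 2) (Fin 2) ℝ, M = !![x, y; 0, z] := ⟨_, rfl⟩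
  have hdet : M.det ≠ 0 := by
    rw [hM, Matrix.det_fin_two_of]
    intro h0; exact mul_ne_zero hx0 hz0 (by linarith)
  have hM00 : M 0 0 = x := by rw [hM]; rfl
  have hM01 : M 0 1 = y := by rw [hM]; rfl
  have hM10 : M 1 0 = 0 := by rw [hM]; rfl
  have hM11 : M 1 1 = z := by rw [hM]; rfl
  refine ⟨Matrix.GeneralLinearGroup.mkOfDetNeZero M hdet, ⟨hM10, ?_⟩, ?_⟩
  · -- the constructed g acts correctly
    show substAction M _ = _
    rw [substAction_cubic]
    have hA : Matrix.vecMul a M = (a 0 * x / m 0) • m := by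
      funext j
      fin_cases j
      · simp only [hM, Matrix.vecMul, dotProduct, Fin.sum_univ_two, Pi.smul_apply,
          smul_eq_mul, Fin.isValue, Fin.zero_eta, Matrix.cons_val', Matrix.cons_val_zero,
          Matrix.empty_val', Matrix.cons_val_fin_one, Matrix.cons_val_one, Matrix.head_cons,
          Matrix.head_fin_const, Matrix.of_apply]
        field_simp
        ring
      · simp only [hM, Matrix.vecMul, dotProduct, Fin.sum_univ_two, Pi.smul_apply,
          smul_eq_mul, Fin.isValue, Fin.mk_one, Matrix.cons_val', Matrix.cons_val_zero,
          Matrix.empty_val', Matrix.cons_val_fin_one, Matrix.cons_val_one, Matrix.head_cons,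
          Matrix.head_fin_const, Matrix.of_apply]
        rw [div_mul_eq_mul_div, eq_div_iff hm]
        linear_combination hU2
    have hB : Matrix.vecMul b M = (b 0 * x / n 0) • n := by
      funext j
      fin_cases j
      · simp only [hM, Matrix.vecMul, dotProduct, Fin.sum_univ_two, Pi.smul_apply,
          smul_eq_mul, Fin.isValue, Fin.zero_eta, Matrix.cons_val', Matrix.cons_val_zero,
          Matrix.empty_val', Matrix.cons_val_fin_one, Matrix.cons_val_one, Matrix.head_cons,
          Matrix.head_fin_const, Matrix.of_apply]
        field_simp
        ring
      · simp only [hM, Matrix.vecMul, dotProduct, Fin.sum_univ_two, Pi.smul_apply,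
          smul_eq_mul, Fin.isValue, Fin.mk_one, Matrix.cons_val', Matrix.cons_val_zero,
          Matrix.empty_val', Matrix.cons_val_fin_one, Matrix.cons_val_one, Matrix.head_cons,
          Matrix.head_fin_const, Matrix.of_apply]
        rw [div_mul_eq_mul_div, eq_div_iff hn]
        linear_combination hU3
    have hs : (a 0 * x / m 0) ^ 2 * (b 0 * x / n 0) = 1 := by
      field_simp
      linear_combination hU1
    rw [hA, hB, linForm_smul, linForm_smul]
    calc (C (a 0 * x / m 0) * linForm m) ^ 2 * (C (b 0 * x / n 0) * linForm n)
        = C ((a 0 * x / m 0) ^ 2 * (b 0 * x / n 0)) * (linForm m ^ 2 * linForm n) := by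
          rw [map_mul, map_pow]; ring
      _ = linForm m ^ 2 * linForm n := by rw [hs]; simp
  · -- uniqueness
    rintro g' ⟨hg'0, hg'sub⟩
    obtain ⟨k1, k2, k3⟩ := key g' hg'0 hg'sub
    set M' := (↑g' : Matrix (Fin 2) (Fin 2) ℝ) with hM'def
    have hx' : M' 0 0 = x := by
      have hcube : M' 0 0 ^ 3 = x ^ 3 :=
        mul_left_cancel₀ habn (by linarith)
      have h3 : StrictMono fun t : ℝ => t ^ 3 := Odd.strictMono_pow (by decide)
      exact h3.injective hcube
    have e1 : m 0 * (a 0 * (M' 0 1 - y) + a 1 * (M' 1 1 - z)) = 0 := by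
      linear_combination k2 - hU2 + (m 1 * a 0) * hx'
    have e2 : n 0 * (b 0 * (M' 0 1 - y) + b 1 * (M' 1 1 - z)) = 0 := by
      linear_combination k3 - hU3 + (n 1 * b 0) * hx'
    have e1' : a 0 * (M' 0 1 - y) + a 1 * (M' 1 1 - z) = 0 :=
      (mul_eq_zero.mp e1).resolve_left hm
    have e2' : b 0 * (M' 0 1 - y) + b 1 * (M' 1 1 - z) = 0 :=
      (mul_eq_zero.mp e2).resolve_left hn
    have hy' : M' 0 1 = y := by
      have h0 : (a 0 * b 1 - a 1 * b 0) * (M' 0 1 - y) = 0 := by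
        linear_combination b 1 * e1' - a 1 * e2'
      have := (mul_eq_zero.mp h0).resolve_left hDab
      linarith
    have hz' : M' 1 1 = z := by
      have h0 : (a 0 * b 1 - a 1 * b 0) * (M' 1 1 - z) = 0 := by
        linear_combination a 0 * e2' - b 0 * e1'
      have := (mul_eq_zero.mp h0).resolve_left hDab
      linarith
    apply Matrix.GeneralLinearGroup.ext
    intro i j
    have hcoe : ((Matrix.GeneralLinearGroup.mkOfDetNeZero M hdet : GL (Fin 2) ℝ)
        : Matrix (Fin 2) (Fin 2) ℝ) = M := rfl
    rw [hcoe]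
    fin_cases i <;> fin_cases j
    · show M' 0 0 = M 0 0
      rw [hM00]; exact hx'
    · show M' 0 1 = M 0 1
      rw [hM01]; exact hy'
    · show M' 1 0 = M 1 0
      rw [hM10]; exact hg'0
    · show M' 1 1 = M 1 1
      rw [hM11]; exact hz'
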